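/- arXiv:2408.11527 — 4 statements merged into one kernel-verified Lean document; each statement's English description precedes it below -/
import Mathlib

section
/- Let M ≥ 1, let y_ref ∈ ℝ^M, and let Y = {y_1, …, y_k} ⊆ ℝ^M be a finite nonempty set of points. Then HV_{y_ref}(Y) = c_M · 𝔼_w[ max_{y ∈ Y} s_w(y − y_ref) ], where w is drawn uniformly from W⁺. -/
open MeasureTheory

/-- Pareto dominance: `y` Pareto-dominates `u`. -/
def ParetoLT {M : ℕ} (u y : EuclideanSpace ℝ (Fin M)) : Prop :=
  (∀ m, u m ≤ y m) ∧ ∃ j, u j < y j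

/-- The dimension-dependent constant `c_M = π^{M/2} / (2^M · Γ(M/2 + 1))`. -/
noncomputable def cM (M : ℕ) : ℝ :=
  Real.pi ^ ((M : ℝ) / 2) / (2 ^ M * Real.Gamma ((M : ℝ) / 2 + 1))

/-- The hypervolume scalarization `s_w(y) = (min_m max(y^(m)/w^(m), 0))^M`. -/
noncomputable def hvScalarization {M : ℕ} (w y : EuclideanSpace ℝ (Fin M)) : ℝ :=
  (⨅ m : Fin M, max (y m / w m) 0) ^ M

/-- The positive part `W⁺` of the unit sphere in `ℝ^M`. -/
def Wpos (M : ℕ) : Set (Metric.sphere (0 : EuclideanSpace ℝ (Fin M)) 1) :=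
  {w | ∀ m, 0 < (w : EuclideanSpace ℝ (Fin M)) m}

/-- The rotation-invariant surface measure on the unit sphere in `ℝ^M`. -/
noncomputable def sphereMeasure (M : ℕ) :
    Measure (Metric.sphere (0 : EuclideanSpace ℝ (Fin M)) 1) :=
  (volume : Measure (EuclideanSpace ℝ (Fin M))).toSphere

/-- The hypervolume indicator of `Y` with respect to reference point `yref`. -/
noncomputable def HV {M : ℕ} (yref : EuclideanSpace ℝ (Fin M))
    (Y : Set (EuclideanSpace ℝ (Fin M))) : ENNReal :=
  volume {u : EuclideanSpace ℝ (Fin M) | (∀ m, yref m ≤ u m) ∧ ∃ y ∈ Y, ParetoLT u y}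

namespace HVAux

open Set Metric MeasureTheory MeasureTheory.Measure

variable {M : ℕ}

lemma measurable_eval (m : Fin M) : Measurable fun v : EuclideanSpace ℝ (Fin M) => v m :=
  (EuclideanSpace.proj (𝕜 := ℝ) m).continuous.measurable

lemma abs_coord_le_norm (v : EuclideanSpace ℝ (Fin M)) (m : Fin M) : |v m| ≤ ‖v‖ := by
  rw [EuclideanSpace.norm_eq]
  rw [← Real.sqrt_sq_eq_abs]
  apply Real.sqrt_le_sqrt
  calc v m ^ 2 ≤ ∑ i : Fin M, v i ^ 2 :=
        Finset.single_le_sum (f := fun i => v i ^ 2) (fun i _ => sq_nonneg _) (Finset.mem_univ m)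
    _ = ∑ i : Fin M, ‖v i‖ ^ 2 := by simp [Real.norm_eq_abs, sq_abs]

lemma volumeIoiPow_setOf_le (n : ℕ) {c : ℝ} (hc : 0 ≤ c) :
    Measure.volumeIoiPow n {r : Set.Ioi (0:ℝ) | (r : ℝ) ≤ c}
      = ENNReal.ofReal (c ^ (n + 1) / (n + 1)) := by
  rcases eq_or_lt_of_le hc with h0 | h0
  · have : {r : Set.Ioi (0:ℝ) | (r : ℝ) ≤ c} = ∅ := by
      ext r; simp only [mem_setOf_eq, mem_empty_iff_false, iff_false, not_le, ← h0]
      exact r.2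
    subst h0
    simp [this]
  · set x : Set.Ioi (0:ℝ) := ⟨c, h0⟩ with hx
    have hset : {r : Set.Ioi (0:ℝ) | (r : ℝ) ≤ c} = Iic x := rfl
    have hsing : Measure.volumeIoiPow n {x} = 0 := by
      rw [Measure.volumeIoiPow, withDensity_apply _ (measurableSet_singleton x)]
      apply setLIntegral_measure_zero
      rw [comap_subtype_coe_apply measurableSet_Ioi]
      simp
    have hIic : Measure.volumeIoiPow n (Iic x) = Measure.volumeIoiPow n (Iio x) := by
      apply le_antisymm
      · rw [← Set.Iio_union_right]
        calc Measure.volumeIoiPow n (Iio x ∪ {x})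
            ≤ Measure.volumeIoiPow n (Iio x) + Measure.volumeIoiPow n {x} := measure_union_le _ _
          _ = Measure.volumeIoiPow n (Iio x) := by rw [hsing, add_zero]
      · exact measure_mono Iio_subset_Iic_self
    rw [hset, hIic, Measure.volumeIoiPow_apply_Iio]

lemma measurable_rho {ι : Type*} {s : Finset ι} (hs : s.Nonempty)
    {α : Type*} [MeasurableSpace α] {f : ι → α → ℝ} (hf : ∀ i, Measurable (f i)) :
    Measurable fun a => s.sup' hs fun i => f i a := by
  induction hs using Finset.Nonempty.cons_induction with
  | singleton i => simp only [Finset.sup'_singleton]; exact hf i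
  | cons i s hi hs ih =>
    simp only [Finset.sup'_cons hs]
    exact (hf i).sup ih

lemma pow_sup' {ι : Type*} {s : Finset ι} (hs : s.Nonempty) (f : ι → ℝ)
    (h0 : ∀ i ∈ s, 0 ≤ f i) :
    (s.sup' hs f) ^ M = s.sup' hs fun i => f i ^ M := by
  obtain ⟨b, hb, hbe⟩ := Finset.exists_mem_eq_sup' hs f
  apply le_antisymm
  · rw [hbe]
    exact Finset.le_sup' (fun i => f i ^ M) hb
  · apply Finset.sup'_le
    intro i hi
    exact pow_le_pow_left₀ (h0 i hi) (Finset.le_sup' f hi) M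

/-- Generalized polar coordinates computation. -/
lemma polar (hM : 1 ≤ M) {W' : Set (Metric.sphere (0 : EuclideanSpace ℝ (Fin M)) 1)}
    (hW' : MeasurableSet W')
    {ρ : Metric.sphere (0 : EuclideanSpace ℝ (Fin M)) 1 → ℝ}
    (hρ : Measurable ρ) (hρ0 : ∀ w, 0 ≤ ρ w)
    {S : Set (EuclideanSpace ℝ (Fin M))} (hSm : MeasurableSet S) (h0 : (0 : EuclideanSpace ℝ (Fin M)) ∉ S)
    (hS : ∀ (w : Metric.sphere (0 : EuclideanSpace ℝ (Fin M)) 1) (r : ℝ), 0 < r →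
      (r • (w : EuclideanSpace ℝ (Fin M)) ∈ S ↔ w ∈ W' ∧ r ≤ ρ w)) :
    volume S = ∫⁻ w in W', ENNReal.ofReal (ρ w ^ M / M) ∂(sphereMeasure M) := by
  set h := homeomorphUnitSphereProd (EuclideanSpace ℝ (Fin M)) with hh
  set A : Set (Metric.sphere (0 : EuclideanSpace ℝ (Fin M)) 1 × Set.Ioi (0:ℝ)) :=
    {p | p.1 ∈ W' ∧ (p.2 : ℝ) ≤ ρ p.1} with hA
  have hAm : MeasurableSet A := by
    have : A = (Prod.fst ⁻¹' W') ∩ {p : Metric.sphere (0 : EuclideanSpace ℝ (Fin M)) 1 × Set.Ioi (0:ℝ) |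
        (p.2 : ℝ) ≤ ρ p.1} := rfl
    rw [this]
    exact (measurable_fst hW').inter
      (measurableSet_le (continuous_subtype_val.measurable.comp measurable_snd)
        (hρ.comp measurable_fst))
  have hSsub : S ⊆ ({0}ᶜ : Set (EuclideanSpace ℝ (Fin M))) := fun v hv hv0 => h0 (by rwa [← hv0])
  have hpre : (Subtype.val ⁻¹' S : Set ({0}ᶜ : Set (EuclideanSpace ℝ (Fin M)))) = h ⁻¹' A := by
    ext x
    obtain ⟨⟨w, r⟩, rfl⟩ : ∃ p, h.symm p = x := ⟨h x, h.symm_apply_apply x⟩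
    have hco : ((h.symm (w, r) : ({0}ᶜ : Set (EuclideanSpace ℝ (Fin M)))) : EuclideanSpace ℝ (Fin M)) = (r : ℝ) • (w : EuclideanSpace ℝ (Fin M)) := rfl
    simp only [Set.mem_preimage, Homeomorph.apply_symm_apply, hco]
    exact hS w r r.2
  have key := (measurePreserving_homeomorphUnitSphereProd
    (volume : Measure (EuclideanSpace ℝ (Fin M)))).measure_preimage hAm.nullMeasurableSet
  rw [← hpre] at key
  have hcomap : (volume : Measure (EuclideanSpace ℝ (Fin M))).comap Subtype.val (Subtype.val ⁻¹' S : Set ({0}ᶜ : Set (EuclideanSpace ℝ (Fin M))))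
      = volume S := by
    rw [comap_subtype_coe_apply (measurableSet_singleton (0 : EuclideanSpace ℝ (Fin M))).compl,
      Subtype.image_preimage_coe, Set.inter_eq_right.mpr hSsub]
  rw [hcomap] at key
  rw [key]
  have hrank : Module.finrank ℝ (EuclideanSpace ℝ (Fin M)) - 1 = M - 1 := by
    rw [finrank_euclideanSpace_fin]
  rw [hrank]
  rw [Measure.prod_apply hAm]
  have hfib : ∀ w : Metric.sphere (0 : EuclideanSpace ℝ (Fin M)) 1,
      Measure.volumeIoiPow (M - 1) (Prod.mk w ⁻¹' A)
        = W'.indicator (fun w => ENNReal.ofReal (ρ w ^ M / M)) w := by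
    intro w
    by_cases hw : w ∈ W'
    · have hpA : Prod.mk w ⁻¹' A = {r : Set.Ioi (0:ℝ) | (r : ℝ) ≤ ρ w} := by
        ext r; simp [hA, hw]
      rw [hpA, volumeIoiPow_setOf_le _ (hρ0 w), Set.indicator_of_mem hw,
        Nat.sub_add_cancel hM]
      congr 2
      rw [Nat.cast_sub hM]
      push_cast
      ring
    · have hpA : Prod.mk w ⁻¹' A = ∅ := by
        ext r; simp [hA, hw]
      simp [hpA, Set.indicator_of_notMem hw]
  rw [lintegral_congr hfib, lintegral_indicator hW']
  rfl


lemma nontrivial_E (hM : 1 ≤ M) : Nontrivial (EuclideanSpace ℝ (Fin M)) := by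
  set i : Fin M := ⟨0, hM⟩
  refine ⟨EuclideanSpace.single i (1:ℝ), 0, fun h => ?_⟩
  have h1 : (EuclideanSpace.single i (1:ℝ)) i = (0 : EuclideanSpace ℝ (Fin M)) i := by
    rw [h]
  simp [EuclideanSpace.single_apply] at h1

lemma hyperplane_null (m : Fin M) :
    volume {v : EuclideanSpace ℝ (Fin M) | v m = 0} = 0 := by
  have hker : {v : EuclideanSpace ℝ (Fin M) | v m = 0}
      = (LinearMap.ker (EuclideanSpace.projₗ (𝕜 := ℝ) m) : Set (EuclideanSpace ℝ (Fin M))) := by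
    ext v
    simp [LinearMap.mem_ker]
  rw [hker]
  apply Measure.addHaar_submodule
  intro htop
  have h1 : EuclideanSpace.single m (1:ℝ) ∈ LinearMap.ker (EuclideanSpace.projₗ (𝕜 := ℝ) m) := by
    rw [htop]; trivial
  rw [LinearMap.mem_ker] at h1
  have h2 : EuclideanSpace.projₗ (𝕜 := ℝ) m (EuclideanSpace.single m (1:ℝ))
      = (1:ℝ) := by
    show (EuclideanSpace.single m (1:ℝ)) m = 1
    simp [EuclideanSpace.single_apply]
  rw [h1] at h2
  exact one_ne_zero h2.symm

lemma HV_eq (hM : 1 ≤ M) (yref : EuclideanSpace ℝ (Fin M)) (Y : Finset (EuclideanSpace ℝ (Fin M)))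
    (hY : Y.Nonempty) :
    HV yref (Y : Set (EuclideanSpace ℝ (Fin M)))
      = volume {v : EuclideanSpace ℝ (Fin M) |
          (∀ m, 0 < v m) ∧ ∃ y ∈ Y, ∀ m, v m ≤ (y - yref) m} := by
  classical
  have hne : Nonempty (Fin M) := ⟨⟨0, hM⟩⟩
  haveI : IsFiniteMeasure (sphereMeasure M) :=
    inferInstanceAs (IsFiniteMeasure (volume : Measure (EuclideanSpace ℝ (Fin M))).toSphere)
  haveI hnt : Nontrivial (EuclideanSpace ℝ (Fin M)) := nontrivial_E hM
  set A' : Set (EuclideanSpace ℝ (Fin M)) :=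
    {v | (∀ m, 0 ≤ v m) ∧ ∃ y ∈ Y, ParetoLT v (y - yref)} with hA'
  have hA'm : MeasurableSet A' := by
    have : A' = (⋂ m, {v : EuclideanSpace ℝ (Fin M) | 0 ≤ v m}) ∩
        ⋃ y ∈ Y, ((⋂ m, {v : EuclideanSpace ℝ (Fin M) | v m ≤ (y - yref) m}) ∩
          ⋃ j, {v : EuclideanSpace ℝ (Fin M) | v j < (y - yref) j}) := by
      ext v
      simp only [hA', Set.mem_setOf_eq, Set.mem_inter_iff, Set.mem_iInter, Set.mem_iUnion,
        ParetoLT, exists_prop, Finset.mem_coe]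
    rw [this]
    refine (MeasurableSet.iInter fun m =>
      measurableSet_le measurable_const (measurable_eval m)).inter
      (Y.measurableSet_biUnion fun y _ => MeasurableSet.inter ?_ ?_)
    · exact MeasurableSet.iInter fun m => measurableSet_le (measurable_eval m) measurable_const
    · exact MeasurableSet.iUnion fun j => measurableSet_lt (measurable_eval j) measurable_const
  have h1 : HV yref (Y : Set (EuclideanSpace ℝ (Fin M))) = volume A' := by
    have hset : {u : EuclideanSpace ℝ (Fin M) | (∀ m, yref m ≤ u m) ∧
        ∃ y ∈ (Y : Set (EuclideanSpace ℝ (Fin M))), ParetoLT u y}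
        = (fun u => u - yref) ⁻¹' A' := by
      ext u
      simp [hA', ParetoLT, PiLp.sub_apply, sub_nonneg, sub_le_sub_iff_right,
        sub_lt_sub_iff_right]
    rw [HV, hset]
    exact (measurePreserving_sub_right volume yref).measure_preimage hA'm.nullMeasurableSet
  set Bfull : Set (EuclideanSpace ℝ (Fin M)) :=
    {v | (∀ m, 0 ≤ v m) ∧ ∃ y ∈ Y, ∀ m, v m ≤ (y - yref) m} with hBfull
  have hsub1 : A' ⊆ Bfull := by
    rintro v ⟨hv0, y, hy, hp⟩
    exact ⟨hv0, y, hy, hp.1⟩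
  have h2 : volume A' = volume Bfull := by
    refine le_antisymm (measure_mono hsub1) ?_
    have hdiff : Bfull \ A' ⊆ ↑(Y.image fun y => y - yref) := by
      rintro v ⟨⟨hv0, y, hy, hle⟩, hvA⟩
      have hnp : ¬ ParetoLT v (y - yref) := fun hp => hvA ⟨hv0, y, hy, hp⟩
      rw [ParetoLT] at hnp
      push_neg at hnp
      have hge := hnp hle
      have heq : v = y - yref := PiLp.ext fun m => le_antisymm (hle m) (hge m)
      rw [Finset.coe_image]
      exact ⟨y, hy, heq.symm⟩
    have hnull : volume (Bfull \ A') = 0 :=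
      measure_mono_null hdiff ((Y.image fun y => y - yref).finite_toSet.measure_zero volume)
    calc volume Bfull ≤ volume (A' ∪ Bfull \ A') := measure_mono fun v hv => by
          by_cases h : v ∈ A'
          · exact Or.inl h
          · exact Or.inr ⟨hv, h⟩
      _ ≤ volume A' + volume (Bfull \ A') := measure_union_le _ _
      _ = volume A' := by rw [hnull, add_zero]
  set Bpos : Set (EuclideanSpace ℝ (Fin M)) :=
    {v | (∀ m, 0 < v m) ∧ ∃ y ∈ Y, ∀ m, v m ≤ (y - yref) m} with hBpos
  have hsub2 : Bpos ⊆ Bfull := by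
    rintro v ⟨hv0, hex⟩
    exact ⟨fun m => (hv0 m).le, hex⟩
  have h3 : volume Bfull = volume Bpos := by
    refine le_antisymm ?_ (measure_mono hsub2)
    have hdiff : Bfull \ Bpos ⊆ ⋃ m, {v : EuclideanSpace ℝ (Fin M) | v m = 0} := by
      rintro v ⟨⟨hv0, hex⟩, hvB⟩
      have : ¬ ∀ m, 0 < v m := fun h => hvB ⟨h, hex⟩
      push_neg at this
      obtain ⟨m, hm⟩ := this
      exact Set.mem_iUnion.mpr ⟨m, le_antisymm hm (hv0 m)⟩
    have hnull : volume (Bfull \ Bpos) = 0 :=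
      measure_mono_null hdiff (measure_iUnion_null fun m => hyperplane_null m)
    calc volume Bfull ≤ volume (Bpos ∪ Bfull \ Bpos) := measure_mono fun v hv => by
          by_cases h : v ∈ Bpos
          · exact Or.inl h
          · exact Or.inr ⟨hv, h⟩
      _ ≤ volume Bpos + volume (Bfull \ Bpos) := measure_union_le _ _
      _ = volume Bpos := by rw [hnull, add_zero]
  rw [h1, h2, h3]

lemma volume_orthant_ball (hM : 1 ≤ M) :
    volume (Metric.ball (0 : EuclideanSpace ℝ (Fin M)) 1)
      = 2 ^ M * volume {v : EuclideanSpace ℝ (Fin M) | (∀ m, 0 < v m) ∧ ‖v‖ ≤ 1} := by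
  classical
  haveI hnt : Nontrivial (EuclideanSpace ℝ (Fin M)) := nontrivial_E hM
  set B := Metric.closedBall (0 : EuclideanSpace ℝ (Fin M)) 1 with hB
  have hBm : MeasurableSet B := measurableSet_closedBall
  set O : (Fin M → Bool) → Set (EuclideanSpace ℝ (Fin M)) :=
    fun ε => {v | ∀ m, 0 < (if ε m then (1:ℝ) else -1) * v m} with hO
  have hOm : ∀ ε, MeasurableSet (O ε) := by
    intro ε
    have h : O ε = ⋂ m, {v : EuclideanSpace ℝ (Fin M) |
        0 < (if ε m then (1:ℝ) else -1) * v m} := by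
      ext v; simp [hO]
    rw [h]
    exact MeasurableSet.iInter fun m =>
      measurableSet_lt measurable_const ((measurable_eval m).const_mul _)
  have hdisj : Pairwise (Function.onFun Disjoint fun ε => B ∩ O ε) := by
    intro ε ε' hne
    rw [Function.onFun, Set.disjoint_left]
    rintro v ⟨-, hv⟩ ⟨-, hv'⟩
    obtain ⟨m, hm⟩ := Function.ne_iff.mp hne
    have h1 := hv m
    have h2 := hv' m
    rcases Bool.eq_false_or_eq_true (ε m) with hb | hb <;>
      rcases Bool.eq_false_or_eq_true (ε' m) with hb' | hb'
    · exact hm (hb.trans hb'.symm)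
    · rw [hb] at h1; rw [hb'] at h2; norm_num at h1 h2; nlinarith
    · rw [hb] at h1; rw [hb'] at h2; norm_num at h1 h2; nlinarith
    · exact hm (hb.trans hb'.symm)
  have hcover : B ⊆ (⋃ ε, B ∩ O ε) ∪ ⋃ m, {v : EuclideanSpace ℝ (Fin M) | v m = 0} := by
    intro v hv
    by_cases h : ∀ m, v m ≠ 0
    · left
      refine Set.mem_iUnion.mpr ⟨fun m => decide (0 < v m), hv, fun m => ?_⟩
      by_cases hpos : 0 < v m
      · simp [hpos]
      · have hneg : v m < 0 := lt_of_le_of_ne (not_lt.mp hpos) (h m)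
        have hd : (decide (0 < v m)) = false := decide_eq_false hpos
        simp only [hd]
        norm_num
        nlinarith
    · push_neg at h
      obtain ⟨m, hm⟩ := h
      exact Or.inr (Set.mem_iUnion.mpr ⟨m, hm⟩)
  have hBeq : volume B = ∑ ε : Fin M → Bool, volume (B ∩ O ε) := by
    have hle : volume B ≤ volume (⋃ ε, B ∩ O ε) := by
      calc volume B ≤ volume ((⋃ ε, B ∩ O ε) ∪ ⋃ m, {v : EuclideanSpace ℝ (Fin M) | v m = 0}) :=
            measure_mono hcover
        _ ≤ volume (⋃ ε, B ∩ O ε) + volume (⋃ m, {v : EuclideanSpace ℝ (Fin M) | v m = 0}) :=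
            measure_union_le _ _
        _ = volume (⋃ ε, B ∩ O ε) := by
            rw [measure_iUnion_null fun m => hyperplane_null m, add_zero]
    have hge : volume (⋃ ε, B ∩ O ε) ≤ volume B :=
      measure_mono (Set.iUnion_subset fun ε => Set.inter_subset_left)
    have huni : volume (⋃ ε, B ∩ O ε) = ∑' ε : Fin M → Bool, volume (B ∩ O ε) :=
      measure_iUnion hdisj fun ε => hBm.inter (hOm ε)
    rw [le_antisymm hle hge, huni, tsum_fintype]
  have hpiece : ∀ ε, volume (B ∩ O ε)
      = volume {v : EuclideanSpace ℝ (Fin M) | (∀ m, 0 < v m) ∧ ‖v‖ ≤ 1} := by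
    intro ε
    set T := LinearIsometryEquiv.piLpCongrRight 2
      (fun m : Fin M => if ε m then LinearIsometryEquiv.refl ℝ ℝ
        else LinearIsometryEquiv.neg ℝ) with hT
    have hTapp : ∀ (v : EuclideanSpace ℝ (Fin M)) m, T v m = if ε m then v m else -v m := by
      intro v m
      rw [hT, LinearIsometryEquiv.piLpCongrRight_apply]
      by_cases h : ε m <;> simp [h]
    have hpre : (T : EuclideanSpace ℝ (Fin M) → EuclideanSpace ℝ (Fin M)) ⁻¹' (B ∩ O ε)
        = {v : EuclideanSpace ℝ (Fin M) | (∀ m, 0 < v m) ∧ ‖v‖ ≤ 1} := by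
      ext v
      simp only [Set.mem_preimage, Set.mem_inter_iff, hB, Metric.mem_closedBall,
        dist_zero_right, hO, Set.mem_setOf_eq, T.norm_map]
      rw [and_comm]
      refine and_congr_left fun _ => forall_congr' fun m => ?_
      rw [hTapp v m]
      by_cases hb : ε m
      · simp [hb]
      · simp [hb]
    rw [← (T.measurePreserving.measure_preimage (hBm.inter (hOm ε)).nullMeasurableSet), hpre]
  rw [← Measure.addHaar_closedBall_eq_addHaar_ball, ← hB, hBeq]
  simp only [hpiece]
  rw [Finset.sum_const, Finset.card_univ, nsmul_eq_mul]
  congr 1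
  rw [Fintype.card_fun]
  push_cast
  simp

end HVAux


theorem hypervolume_eq_scalarization_average {M : ℕ} (hM : 1 ≤ M)
    (yref : EuclideanSpace ℝ (Fin M)) (Y : Finset (EuclideanSpace ℝ (Fin M)))
    (hY : Y.Nonempty) :
    (HV yref (Y : Set (EuclideanSpace ℝ (Fin M)))).toReal =
      cM M * ⨍ w in Wpos M,
        (Y.sup' hY fun y => hvScalarization (↑w) (y - yref)) ∂(sphereMeasure M) := by
  classical
  open HVAux Set Metric in
  have hne : Nonempty (Fin M) := ⟨⟨0, hM⟩⟩
  haveI : IsFiniteMeasure (sphereMeasure M) :=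
    inferInstanceAs (IsFiniteMeasure (volume : Measure (EuclideanSpace ℝ (Fin M))).toSphere)
  haveI hnt : Nontrivial (EuclideanSpace ℝ (Fin M)) := HVAux.nontrivial_E hM
  obtain ⟨y0, hy0⟩ := id hY
  have hMR : (0:ℝ) < M := by exact_mod_cast hM
  -- the radial function
  set ρ : Metric.sphere (0 : EuclideanSpace ℝ (Fin M)) 1 → ℝ :=
    fun w => Y.sup' ⟨y0, hy0⟩ fun y =>
      ⨅ m, max ((y - yref) m / (w : EuclideanSpace ℝ (Fin M)) m) 0 with hρdef
  have hginf0 : ∀ (y : EuclideanSpace ℝ (Fin M))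
      (w : Metric.sphere (0 : EuclideanSpace ℝ (Fin M)) 1),
      0 ≤ ⨅ m, max ((y - yref) m / (w : EuclideanSpace ℝ (Fin M)) m) 0 :=
    fun y w => Real.iInf_nonneg fun m => le_max_right _ _
  have hρ0 : ∀ w, 0 ≤ ρ w := fun w =>
    le_trans (hginf0 y0 w) (Finset.le_sup'
      (fun y => ⨅ m, max ((y - yref) m / (w : EuclideanSpace ℝ (Fin M)) m) 0) hy0)
  have hρmeas : Measurable ρ := by
    refine HVAux.measurable_rho ⟨y0, hy0⟩ fun y => Measurable.iInf fun m => Measurable.max ?_ measurable_const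
    exact Measurable.div measurable_const
      ((HVAux.measurable_eval m).comp measurable_subtype_coe)
  have hY' : Y.Nonempty := ⟨y0, hy0⟩
  have hF : ∀ w : Metric.sphere (0 : EuclideanSpace ℝ (Fin M)) 1,
      (Y.sup' hY' fun y => hvScalarization (↑w) (y - yref)) = ρ w ^ M := by
    intro w
    simp only [hvScalarization, hρdef]
    exact (HVAux.pow_sup' ⟨y0, hy0⟩ _ fun y _ => hginf0 y w).symm
  -- Wpos is measurable
  have hWm : MeasurableSet (Wpos M) := by
    have h : Wpos M = ⋂ m, {w : Metric.sphere (0 : EuclideanSpace ℝ (Fin M)) 1 |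
        0 < (w : EuclideanSpace ℝ (Fin M)) m} := by
      ext w; simp [Wpos]
    rw [h]
    exact MeasurableSet.iInter fun m => measurableSet_lt measurable_const
      ((HVAux.measurable_eval m).comp measurable_subtype_coe)
  -- positive-orthant part of the dominated region
  set Bpos : Set (EuclideanSpace ℝ (Fin M)) :=
    {v | (∀ m, 0 < v m) ∧ ∃ y ∈ Y, ∀ m, v m ≤ (y - yref) m} with hBposdef
  have hBposm : MeasurableSet Bpos := by
    have h : Bpos = (⋂ m, {v : EuclideanSpace ℝ (Fin M) | 0 < v m}) ∩
        ⋃ y ∈ Y, ⋂ m, {v : EuclideanSpace ℝ (Fin M) | v m ≤ (y - yref) m} := by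
      ext v; simp [hBposdef]
    rw [h]
    exact (MeasurableSet.iInter fun m =>
        measurableSet_lt measurable_const (HVAux.measurable_eval m)).inter
      (Y.measurableSet_biUnion fun y _ => MeasurableSet.iInter fun m =>
        measurableSet_le (HVAux.measurable_eval m) measurable_const)
  have h0B : (0 : EuclideanSpace ℝ (Fin M)) ∉ Bpos := by
    rintro ⟨hpos, -⟩
    have := hpos ⟨0, hM⟩
    simp at this
  have hsmul : ∀ (w : Metric.sphere (0 : EuclideanSpace ℝ (Fin M)) 1) (r : ℝ) (m : Fin M),
      (r • (w : EuclideanSpace ℝ (Fin M))) m = r * (w : EuclideanSpace ℝ (Fin M)) m :=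
    fun w r m => rfl
  have hmulpos : ∀ {r x : ℝ}, 0 < r → (0 < r * x ↔ 0 < x) := by
    intro r x hr
    constructor
    · intro h
      by_contra hx
      push_neg at hx
      nlinarith
    · exact fun h => mul_pos hr h
  have hchar : ∀ (w : Metric.sphere (0 : EuclideanSpace ℝ (Fin M)) 1) (r : ℝ), 0 < r →
      (r • (w : EuclideanSpace ℝ (Fin M)) ∈ Bpos ↔ w ∈ Wpos M ∧ r ≤ ρ w) := by
    intro w r hr
    constructor
    · rintro ⟨hpos, y, hy, hle⟩
      have hw : w ∈ Wpos M := fun m => by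
        have := hpos m
        rw [hsmul w r m] at this
        exact (hmulpos hr).mp this
      refine ⟨hw, Finset.le_sup'_iff ⟨y0, hy0⟩ |>.mpr ⟨y, hy, le_ciInf fun m => ?_⟩⟩
      refine le_max_of_le_left ?_
      rw [le_div_iff₀ (hw m)]
      have := hle m
      rwa [hsmul w r m] at this
    · rintro ⟨hw, hr'⟩
      obtain ⟨y, hy, hiy⟩ := (Finset.le_sup'_iff ⟨y0, hy0⟩).mp hr'
      refine ⟨fun m => by rw [hsmul w r m]; exact mul_pos hr (hw m), y, hy, fun m => ?_⟩
      have h1 : r ≤ max ((y - yref) m / (w : EuclideanSpace ℝ (Fin M)) m) 0 :=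
        le_trans hiy (ciInf_le (Set.Finite.bddBelow (Set.finite_range _)) m)
      have h2 : r ≤ (y - yref) m / (w : EuclideanSpace ℝ (Fin M)) m := by
        rcases le_max_iff.mp h1 with h | h
        · exact h
        · linarith
      rw [hsmul w r m]
      exact (le_div_iff₀ (hw m)).mp h2
  -- polar coordinates for Bpos
  have hpolarB := HVAux.polar hM hWm hρmeas hρ0 hBposm h0B hchar
  -- polar coordinates for the positive-orthant part of the ball
  set Bball : Set (EuclideanSpace ℝ (Fin M)) :=
    {v | (∀ m, 0 < v m) ∧ ‖v‖ ≤ 1} with hBballdef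
  have hBballm : MeasurableSet Bball := by
    have h : Bball = (⋂ m, {v : EuclideanSpace ℝ (Fin M) | 0 < v m}) ∩
        {v : EuclideanSpace ℝ (Fin M) | ‖v‖ ≤ 1} := by
      ext v; simp [hBballdef]
    rw [h]
    exact (MeasurableSet.iInter fun m =>
        measurableSet_lt measurable_const (HVAux.measurable_eval m)).inter
      (measurableSet_le continuous_norm.measurable measurable_const)
  have h0ball : (0 : EuclideanSpace ℝ (Fin M)) ∉ Bball := by
    rintro ⟨hpos, -⟩
    have := hpos ⟨0, hM⟩
    simp at this
  have hcharball : ∀ (w : Metric.sphere (0 : EuclideanSpace ℝ (Fin M)) 1) (r : ℝ), 0 < r →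
      (r • (w : EuclideanSpace ℝ (Fin M)) ∈ Bball ↔ w ∈ Wpos M ∧ r ≤ (fun _ => (1:ℝ)) w) := by
    intro w r hr
    have hnorm : ‖r • (w : EuclideanSpace ℝ (Fin M))‖ = r := by
      rw [norm_smul, Real.norm_eq_abs, abs_of_pos hr,
        mem_sphere_zero_iff_norm.mp w.2, mul_one]
    constructor
    · rintro ⟨hpos, hle⟩
      rw [hnorm] at hle
      exact ⟨fun m => by
        have := hpos m; rw [hsmul w r m] at this; exact (hmulpos hr).mp this, hle⟩
    · rintro ⟨hw, hle⟩
      exact ⟨fun m => by rw [hsmul w r m]; exact mul_pos hr (hw m), by rw [hnorm]; exact hle⟩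
  have hpolarBall := HVAux.polar hM hWm (ρ := fun _ => (1:ℝ)) measurable_const
    (fun _ => zero_le_one) hBballm h0ball hcharball
  rw [setLIntegral_const, one_pow] at hpolarBall
  -- hpolarBall : volume Bball = ofReal (1 / M) * sphereMeasure M (Wpos M)
  -- finiteness of Bpos
  set C : ℝ := Y.sup' hY' fun y => ‖y - yref‖ with hC
  have hC0 : 0 ≤ C :=
    le_trans (norm_nonneg (y0 - yref)) (Finset.le_sup' (fun y => ‖y - yref‖) hy0)
  have hBsub : Bpos ⊆ Metric.closedBall 0 (Real.sqrt (M * C ^ 2)) := by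
    rintro v ⟨hv0, y, hy, hle⟩
    rw [Metric.mem_closedBall, dist_zero_right, EuclideanSpace.norm_eq]
    apply Real.sqrt_le_sqrt
    have hterm : ∀ i : Fin M, ‖v i‖ ^ 2 ≤ C ^ 2 := by
      intro i
      have h1 : |v i| ≤ C := by
        rw [abs_of_nonneg (hv0 i).le]
        calc v i ≤ (y - yref) i := hle i
          _ ≤ |(y - yref) i| := le_abs_self _
          _ ≤ ‖y - yref‖ := HVAux.abs_coord_le_norm _ i
          _ ≤ C := Finset.le_sup' (fun y => ‖y - yref‖) hy
      rw [Real.norm_eq_abs]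
      nlinarith [abs_nonneg (v i)]
    calc ∑ i : Fin M, ‖v i‖ ^ 2 ≤ ∑ _i : Fin M, C ^ 2 := Finset.sum_le_sum fun i _ => hterm i
      _ = M * C ^ 2 := by rw [Finset.sum_const, Finset.card_univ, Fintype.card_fin, nsmul_eq_mul]
  have hBpostop : volume Bpos ≠ ⊤ :=
    ((measure_mono hBsub).trans_lt measure_closedBall_lt_top).ne
  have hBballtop : volume Bball ≠ ⊤ :=
    ((measure_mono fun v hv => Metric.mem_closedBall.mpr
      (by rw [dist_zero_right]; exact hv.2)).trans_lt
        (measure_closedBall_lt_top (x := (0 : EuclideanSpace ℝ (Fin M))) (r := 1))).ne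
  -- ball volume
  have hΓpos : 0 < Real.Gamma ((M:ℝ) / 2 + 1) := Real.Gamma_pos_of_pos (by positivity)
  set V : ℝ := Real.sqrt Real.pi ^ M / Real.Gamma ((M:ℝ) / 2 + 1) with hV
  have hVpos : 0 < V := div_pos (pow_pos (Real.sqrt_pos.mpr Real.pi_pos) M) hΓpos
  have hvb : volume (Metric.ball (0 : EuclideanSpace ℝ (Fin M)) 1) = ENNReal.ofReal V := by
    rw [EuclideanSpace.volume_ball, Fintype.card_fin, ENNReal.ofReal_one, one_pow, one_mul, hV]
  have hsym := HVAux.volume_orthant_ball hM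
  rw [hvb] at hsym
  -- real values
  have h2Mtop : ((2:ENNReal) ^ M) ≠ ⊤ := by simp
  have hvBball : (volume Bball).toReal = V / 2 ^ M := by
    have := congrArg ENNReal.toReal hsym
    rw [ENNReal.toReal_ofReal hVpos.le, ENNReal.toReal_mul] at this
    have h2 : ((2:ENNReal) ^ M).toReal = (2:ℝ) ^ M := by
      simp
    rw [h2] at this
    field_simp at this ⊢
    linarith
  have hσtop : sphereMeasure M (Wpos M) ≠ ⊤ := by
    have : sphereMeasure M (Wpos M) ≤ sphereMeasure M Set.univ := measure_mono (Set.subset_univ _)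
    exact (lt_of_le_of_lt this (measure_lt_top _ _)).ne
  have hσR : (sphereMeasure M (Wpos M)).toReal = M * (V / 2 ^ M) := by
    have := congrArg ENNReal.toReal hpolarBall
    rw [hvBball, ENNReal.toReal_mul,
      ENNReal.toReal_ofReal (one_div_nonneg.mpr (Nat.cast_nonneg M))] at this
    rw [eq_comm, mul_comm] at this
    field_simp at this ⊢
    linarith
  -- lintegral value
  set L : ENNReal := ∫⁻ w in Wpos M, ENNReal.ofReal (ρ w ^ M) ∂(sphereMeasure M) with hL
  have hLB : volume Bpos = L * ENNReal.ofReal (1 / M) := by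
    rw [hpolarB, ← lintegral_mul_const' _ _ ENNReal.ofReal_ne_top]
    apply lintegral_congr
    intro w
    rw [← ENNReal.ofReal_mul (pow_nonneg (hρ0 w) M)]
    congr 1
    field_simp
  have hofM : ENNReal.ofReal (1 / (M:ℝ)) ≠ 0 := by
    simp only [ne_eq, ENNReal.ofReal_eq_zero, not_le]
    positivity
  have hLtop : L ≠ ⊤ := by
    intro h
    rw [h, ENNReal.top_mul hofM] at hLB
    exact hBpostop hLB
  have hLR : L.toReal * (1 / M) = (volume Bpos).toReal := by
    rw [hLB, ENNReal.toReal_mul,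
      ENNReal.toReal_ofReal (one_div_nonneg.mpr (Nat.cast_nonneg M))]
  -- the Bochner integral
  have hFmeas : Measurable fun w : Metric.sphere (0 : EuclideanSpace ℝ (Fin M)) 1 =>
      Y.sup' hY fun y => hvScalarization (↑w) (y - yref) := by
    have h : (fun w : Metric.sphere (0 : EuclideanSpace ℝ (Fin M)) 1 =>
        Y.sup' hY fun y => hvScalarization (↑w) (y - yref)) = fun w => ρ w ^ M :=
      funext hF
    rw [h]
    exact hρmeas.pow_const M
  have hInt : (∫ w in Wpos M, (Y.sup' hY fun y => hvScalarization (↑w) (y - yref))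
      ∂(sphereMeasure M)) = L.toReal := by
    rw [integral_eq_lintegral_of_nonneg_ae
      (Filter.Eventually.of_forall fun w => by rw [hF w]; exact pow_nonneg (hρ0 w) M)
      hFmeas.aestronglyMeasurable]
    congr 1
    apply lintegral_congr
    intro w
    rw [hF w]
  -- put everything together
  rw [HVAux.HV_eq hM yref Y hY, ← hBposdef, MeasureTheory.setAverage_eq, hInt, smul_eq_mul]
  have hcM : cM M = V / 2 ^ M := by
    rw [cM, hV]
    have hsqrt : Real.sqrt Real.pi ^ M = Real.pi ^ ((M:ℝ) / 2) := by
      rw [Real.sqrt_eq_rpow, ← Real.rpow_natCast (Real.pi ^ ((1:ℝ)/2)) M,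
        ← Real.rpow_mul Real.pi_pos.le]
      congr 1
      ring
    rw [hsqrt]
    field_simp
  rw [measureReal_def, hσR, hcM, ← hLR]
  have h2M : (0:ℝ) < 2 ^ M := by positivity
  field_simp
end

section
/- Let M ≥ 1 and let z ∈ ℝ^M satisfy z^(m) ≥ 0 for all m. Then ∏_{m=1}^M z^(m) = c_M · 𝔼_w[ s_w(z) ], where w is drawn uniformly from W⁺. -/
open MeasureTheory

open Set Metric
open scoped Pointwise ENNReal

variable {M : ℕ}

local notation "E" => EuclideanSpace ℝ (Fin M)

-- coordinate hyperplanes are null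
lemma null_coord (m : Fin M) : (volume : Measure E) {x : E | x m = 0} = 0 := by
  have : {x : E | x m = 0} = (LinearMap.ker ((EuclideanSpace.proj m : E →L[ℝ] ℝ) : E →ₗ[ℝ] ℝ) : Set E) := by
    ext x; simp [LinearMap.mem_ker]
  rw [this]
  apply Measure.addHaar_submodule
  intro h
  have h1 : (EuclideanSpace.single m (1:ℝ) : E) m = 0 := by
    have := h ▸ (Submodule.mem_top (R := ℝ) (x := (EuclideanSpace.single m (1:ℝ) : E)))
    simpa [LinearMap.mem_ker] using (h.symm ▸ Submodule.mem_top :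
      (EuclideanSpace.single m (1:ℝ) : E) ∈ LinearMap.ker ((EuclideanSpace.proj m : E →L[ℝ] ℝ) : E →ₗ[ℝ] ℝ))
  simp [EuclideanSpace.single_apply] at h1

lemma null_N : (volume : Measure E) {x : E | ∃ m, x m = 0} = 0 := by
  have : {x : E | ∃ m, x m = 0} = ⋃ m, {x : E | x m = 0} := by ext x; simp
  rw [this]
  exact measure_iUnion_null fun m => null_coord m

lemma vol_box (z : E) (hz : ∀ m, 0 ≤ z m) :
    (volume : Measure E) {x : E | ∀ m, x m ∈ Icc 0 (z m)} = ∏ m, ENNReal.ofReal (z m) := by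
  have h := (EuclideanSpace.volume_preserving_symm_measurableEquiv_toLp (Fin M)).symm
  rw [← h.measure_preimage]
  · have : (MeasurableEquiv.toLp 2 (Fin M → ℝ)).symm.symm ⁻¹' {x : E | ∀ m, x m ∈ Icc 0 (z m)}
        = Set.pi Set.univ (fun m => Icc 0 (z m)) := by
      ext x; simp only [Set.mem_preimage, Set.mem_setOf_eq, Set.mem_pi, Set.mem_univ, forall_true_left, Set.mem_Icc]
      rfl
    rw [this, volume_pi_pi]
    simp [Real.volume_Icc]
  · refine MeasurableSet.nullMeasurableSet ?_
    have : {x : E | ∀ m, x m ∈ Icc 0 (z m)} = ⋂ m, {x : E | x m ∈ Icc 0 (z m)} := by ext x; simp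
    rw [this]
    exact MeasurableSet.iInter fun m =>
      measurableSet_Icc.preimage (EuclideanSpace.proj m).continuous.measurable

lemma measurable_coordSphere (m : Fin M) :
    Measurable (fun w : sphere (0 : E) 1 => (w : E) m) :=
  ((EuclideanSpace.proj m).continuous.measurable).comp measurable_subtype_coe

lemma sphereMeasure_null_N :
    sphereMeasure M {w : sphere (0 : E) 1 | ∃ m, (w : E) m = 0} = 0 := by
  have hmeas : MeasurableSet {w : sphere (0 : E) 1 | ∃ m, (w : E) m = 0} := by
    have : {w : sphere (0 : E) 1 | ∃ m, (w : E) m = 0}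
        = ⋃ m, (fun w : sphere (0 : E) 1 => (w : E) m) ⁻¹' {0} := by ext w; simp
    rw [this]
    exact MeasurableSet.iUnion fun m => (measurable_coordSphere m) (measurableSet_singleton 0)
  rw [sphereMeasure, Measure.toSphere_apply' _ hmeas]
  have : (volume : Measure E) (Ioo (0:ℝ) 1 • (Subtype.val '' {w : sphere (0 : E) 1 | ∃ m, (w : E) m = 0})) = 0 := by
    refine measure_mono_null ?_ (null_N (M := M))
    rintro x hx
    rw [Set.mem_smul] at hx
    obtain ⟨r, y, hr, hy, rfl⟩ := hx
    obtain ⟨w, ⟨m, hm⟩, rfl⟩ := hy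
    exact ⟨m, by simp [hm]⟩
  rw [this, mul_zero]

def Ppos (M : ℕ) : Set (EuclideanSpace ℝ (Fin M)) := {x | ∀ m, 0 < x m}

def Psign (ε : Fin M → Bool) : Set (EuclideanSpace ℝ (Fin M)) :=
  {x | ∀ m, if ε m then x m < 0 else 0 < x m}

noncomputable def reflIso (ε : Fin M → Bool) : E ≃ₗᵢ[ℝ] E :=
  LinearIsometryEquiv.piLpCongrRight 2
    (fun m => if ε m then LinearIsometryEquiv.neg ℝ else LinearIsometryEquiv.refl ℝ ℝ)

lemma reflIso_apply (ε : Fin M → Bool) (x : E) (m : Fin M) :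
    reflIso ε x m = if ε m then -(x m) else x m := by
  simp [reflIso, LinearIsometryEquiv.piLpCongrRight_apply]
  by_cases h : ε m <;> simp [h]

lemma measurableSet_Psign (ε : Fin M → Bool) : MeasurableSet (Psign ε) := by
  have : Psign ε = ⋂ m, (fun x : E => x m) ⁻¹' (if ε m then Iio 0 else Ioi 0) := by
    ext x
    simp only [Psign, mem_setOf_eq, mem_iInter, mem_preimage]
    refine forall_congr' fun m => ?_
    by_cases h : ε m <;> simp [h]
  rw [this]
  refine MeasurableSet.iInter fun m => ?_
  have hc : Measurable (fun x : E => x m) := (EuclideanSpace.proj m).continuous.measurable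
  by_cases h : ε m <;> simp only [h, if_true, if_false]
  · exact hc measurableSet_Iio
  · exact hc measurableSet_Ioi

lemma vol_ball_Psign (ε : Fin M → Bool) :
    (volume : Measure E) (ball 0 1 ∩ Psign ε) = volume (ball 0 1 ∩ Ppos M) := by
  have h := (reflIso ε).measurePreserving
  rw [← h.measure_preimage ((measurableSet_ball.inter (measurableSet_Psign ε)).nullMeasurableSet)]
  congr 1
  ext x
  simp only [mem_preimage, mem_inter_iff, mem_ball, dist_zero_right]
  constructor
  · rintro ⟨h1, h2⟩
    refine ⟨by simpa using h1, fun m => ?_⟩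
    have := h2 m
    rw [reflIso_apply] at this
    by_cases hm : ε m <;> simp [hm] at this <;> linarith
  · rintro ⟨h1, h2⟩
    refine ⟨by simpa using h1, fun m => ?_⟩
    rw [reflIso_apply]
    have := h2 m
    by_cases hm : ε m <;> simp [hm] <;> linarith

lemma two_pow_mul_cM (M : ℕ) : Real.sqrt Real.pi ^ M / Real.Gamma ((M:ℝ) / 2 + 1)
    = 2 ^ M * cM M := by
  have hΓ : Real.Gamma ((M:ℝ) / 2 + 1) ≠ 0 :=
    (Real.Gamma_pos_of_pos (by positivity)).ne'
  have hs : Real.sqrt Real.pi ^ M = Real.pi ^ ((M:ℝ) / 2) := by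
    rw [Real.sqrt_eq_rpow, ← Real.rpow_natCast (Real.pi ^ ((1:ℝ)/2)) M,
      ← Real.rpow_mul Real.pi_pos.le]
    norm_num
    rw [mul_comm, mul_one_div]
  rw [hs, cM]
  field_simp

lemma vol_ball_Ppos (hM : 1 ≤ M) :
    (volume : Measure E) (ball 0 1 ∩ Ppos M) = ENNReal.ofReal (cM M) := by
  have : Nonempty (Fin M) := ⟨⟨0, hM⟩⟩
  have hdisj : Pairwise (Function.onFun Disjoint (fun ε : Fin M → Bool => ball (0:E) 1 ∩ Psign ε)) := by
    intro ε ε' hne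
    rw [Function.onFun, Set.disjoint_left]
    rintro x ⟨-, h1⟩ ⟨-, h2⟩
    obtain ⟨m, hm⟩ := Function.ne_iff.1 hne
    have g1 := h1 m
    have g2 := h2 m
    by_cases h : ε m
    · have h' : ε' m = false := by
        cases hεm : ε' m
        · rfl
        · exact absurd (hεm ▸ h ▸ rfl) hm
      rw [h] at g1; rw [h'] at g2; simp at g1 g2; linarith
    · have h' : ε' m = true := by
        cases hεm : ε' m
        · exact absurd (by rw [hεm]; revert h; cases ε m <;> simp) hm
        · rfl
      rw [eq_false_of_ne_true h] at g1; rw [h'] at g2; simp at g1 g2; linarith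
  have hunion : (volume : Measure E) (⋃ ε : Fin M → Bool, ball (0:E) 1 ∩ Psign ε)
      = volume (ball (0:E) 1) := by
    apply le_antisymm
    · exact measure_mono (iUnion_subset fun ε => inter_subset_left)
    · calc volume (ball (0:E) 1)
          ≤ volume ((⋃ ε : Fin M → Bool, ball (0:E) 1 ∩ Psign ε) ∪ {x : E | ∃ m, x m = 0}) := by
            apply measure_mono
            intro x hx
            by_cases h : ∃ m, x m = 0
            · exact Or.inr h
            · push_neg at h
              refine Or.inl (mem_iUnion.2 ⟨fun m => decide (x m < 0), hx, fun m => ?_⟩)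
              by_cases hm : x m < 0
              · simp [hm]
              · have : 0 < x m := lt_of_le_of_ne (not_lt.1 hm) (Ne.symm (h m))
                simp [not_lt.1 hm, this, not_lt_of_gt this]
        _ ≤ volume (⋃ ε : Fin M → Bool, ball (0:E) 1 ∩ Psign ε) + volume {x : E | ∃ m, x m = 0} :=
            measure_union_le _ _
        _ = volume (⋃ ε : Fin M → Bool, ball (0:E) 1 ∩ Psign ε) := by rw [null_N, add_zero]
  have hsum : (volume : Measure E) (⋃ ε : Fin M → Bool, ball (0:E) 1 ∩ Psign ε)
      = (2:ℝ≥0∞) ^ M * volume (ball (0:E) 1 ∩ Ppos M) := by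
    rw [measure_iUnion hdisj (fun ε => measurableSet_ball.inter (measurableSet_Psign ε))]
    simp_rw [vol_ball_Psign]
    rw [tsum_fintype]
    rw [Finset.sum_const, Finset.card_univ]
    rw [Fintype.card_fun]
    simp [nsmul_eq_mul]
  have hball : (volume : Measure E) (ball 0 1) = (2:ℝ≥0∞)^M * ENNReal.ofReal (cM M) := by
    rw [EuclideanSpace.volume_ball]
    simp only [Fintype.card_fin, ENNReal.ofReal_one, one_pow, one_mul]
    rw [two_pow_mul_cM, ENNReal.ofReal_mul (by positivity), ENNReal.ofReal_pow (by norm_num)]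
    norm_num
  have key : (2:ℝ≥0∞) ^ M * volume (ball (0:E) 1 ∩ Ppos M)
      = (2:ℝ≥0∞)^M * ENNReal.ofReal (cM M) := by rw [← hsum, hunion, hball]
  have h2 : ((2:ℝ≥0∞) ^ M) ≠ 0 := by positivity
  have h2' : ((2:ℝ≥0∞) ^ M) ≠ ⊤ := by
    exact ENNReal.pow_ne_top (by norm_num)
  exact (ENNReal.mul_right_inj h2 h2').1 key

lemma measurableSet_Wpos : MeasurableSet (Wpos M) := by
  have : Wpos M = ⋂ m, (fun w : sphere (0 : E) 1 => (w : E) m) ⁻¹' (Ioi 0) := by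
    ext w; simp [Wpos]
  rw [this]
  exact MeasurableSet.iInter fun m => (measurable_coordSphere m) measurableSet_Ioi

lemma smul_Wpos (hM : 1 ≤ M) :
    Ioo (0:ℝ) 1 • (Subtype.val '' Wpos M) = ball (0:E) 1 ∩ Ppos M := by
  ext x
  constructor
  · intro hx
    rw [Set.mem_smul] at hx
    obtain ⟨r, hr, y, hy, rfl⟩ := hx
    obtain ⟨w, hw, rfl⟩ := hy
    have hw1 : ‖(w : E)‖ = 1 := mem_sphere_zero_iff_norm.1 w.2
    constructor
    · rw [mem_ball, dist_zero_right, norm_smul, hw1, mul_one, Real.norm_eq_abs,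
        abs_of_pos hr.1]
      exact hr.2
    · intro m
      have : (r • (w : E)) m = r * (w : E) m := rfl
      rw [this]
      exact mul_pos hr.1 (hw m)
  · rintro ⟨h1, h2⟩
    have hx0 : x ≠ 0 := by
      intro h
      have := h2 ⟨0, hM⟩
      rw [h] at this
      simp at this
    have hnorm : 0 < ‖x‖ := norm_pos_iff.2 hx0
    rw [Set.mem_smul]
    have hsph : (‖x‖⁻¹ • x : E) ∈ sphere (0:E) 1 := by
      rw [mem_sphere_zero_iff_norm, norm_smul, norm_inv, norm_norm,
        inv_mul_cancel₀ hnorm.ne']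
    refine ⟨‖x‖, ⟨hnorm, by rwa [mem_ball, dist_zero_right] at h1⟩,
      ‖x‖⁻¹ • x, ⟨⟨‖x‖⁻¹ • x, hsph⟩, fun m => ?_, rfl⟩, smul_inv_smul₀ hnorm.ne' x⟩
    show 0 < (‖x‖⁻¹ • x : E) m
    have : ((‖x‖⁻¹ • x : E)) m = ‖x‖⁻¹ * x m := rfl
    rw [this]
    exact mul_pos (inv_pos.2 hnorm) (h2 m)

lemma sphereMeasure_Wpos (hM : 1 ≤ M) :
    sphereMeasure M (Wpos M) = ENNReal.ofReal (M * cM M) := by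
  rw [sphereMeasure, Measure.toSphere_apply' _ measurableSet_Wpos, smul_Wpos hM,
    vol_ball_Ppos hM, finrank_euclideanSpace_fin,
    ← ENNReal.ofReal_natCast M, ← ENNReal.ofReal_mul (Nat.cast_nonneg M)]

lemma measurableSet_box (z : E) : MeasurableSet {x : E | ∀ m, x m ∈ Icc 0 (z m)} := by
  have : {x : E | ∀ m, x m ∈ Icc 0 (z m)} = ⋂ m, {x : E | x m ∈ Icc 0 (z m)} := by ext x; simp
  rw [this]
  exact MeasurableSet.iInter fun m =>
    measurableSet_Icc.preimage (EuclideanSpace.proj m).continuous.measurable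

lemma volumeIoiPow_Iic (hM : 1 ≤ M) {R : ℝ} (hR : 0 ≤ R) :
    Measure.volumeIoiPow (M - 1) {r : Ioi (0:ℝ) | r.1 ≤ R} = ENNReal.ofReal (R ^ M / M) := by
  rcases eq_or_lt_of_le hR with h | h
  · have : {r : Ioi (0:ℝ) | r.1 ≤ R} = ∅ := by
      ext r; simp only [mem_setOf_eq, mem_empty_iff_false, iff_false, not_le, ← h]
      exact r.2
    rw [this, measure_empty, ← h, zero_pow (by omega), zero_div, ENNReal.ofReal_zero]
  · have hsplit : {r : Ioi (0:ℝ) | r.1 ≤ R} = Iio ⟨R, h⟩ ∪ {⟨R, h⟩} := by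
      ext r
      simp only [mem_setOf_eq, mem_union, mem_Iio, mem_singleton_iff, Subtype.mk_lt_mk,
        ← Subtype.coe_lt_coe]
      constructor
      · intro hr
        rcases lt_or_eq_of_le hr with h' | h'
        · exact Or.inl h'
        · exact Or.inr (Subtype.ext h')
      · rintro (h' | rfl)
        · exact le_of_lt h'
        · rfl
    have hsing : Measure.volumeIoiPow (M - 1) {(⟨R, h⟩ : Ioi (0:ℝ))} = 0 := by
      rw [Measure.volumeIoiPow, withDensity_apply _ (measurableSet_singleton _)]
      have : (Measure.comap Subtype.val volume) ({(⟨R, h⟩ : Ioi (0:ℝ))}) = 0 := by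
        rw [MeasurableEmbedding.comap_apply (MeasurableEmbedding.subtype_coe measurableSet_Ioi)]
        simp
      rw [setLIntegral_measure_zero _ _ this]
    rw [hsplit, measure_union (by simp [disjoint_singleton_right]) (measurableSet_singleton _),
      hsing, add_zero, Measure.volumeIoiPow_apply_Iio]
    have h1 : M - 1 + 1 = M := by omega
    rw [h1]
    congr 1
    rw [Nat.cast_sub hM]
    push_cast
    ring

lemma sec_wpos (hM : 1 ≤ M) (z : E) (hz : ∀ m, 0 ≤ z m) {w : sphere (0:E) 1}
    (hw : w ∈ Wpos M) :
    Measure.volumeIoiPow (M - 1) {r : Ioi (0:ℝ) | (r.1 • (w : E)) ∈ {x : E | ∀ m, x m ∈ Icc 0 (z m)}}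
      = ENNReal.ofReal (hvScalarization (w : E) z * (M:ℝ)⁻¹) := by
  have : Nonempty (Fin M) := ⟨⟨0, hM⟩⟩
  set R : ℝ := ⨅ m, max (z m / (w : E) m) 0 with hRdef
  have hbdd : BddBelow (Set.range fun m => max (z m / (w : E) m) 0) :=
    (Set.finite_range _).bddBelow
  have hR : 0 ≤ R := le_ciInf fun m => le_max_right _ _
  have hset : {r : Ioi (0:ℝ) | (r.1 • (w : E)) ∈ {x : E | ∀ m, x m ∈ Icc 0 (z m)}}
      = {r : Ioi (0:ℝ) | r.1 ≤ R} := by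
    ext r
    have hr0 : (0:ℝ) < r.1 := r.2
    simp only [mem_setOf_eq, mem_Icc]
    constructor
    · intro h
      rw [hRdef, le_ciInf_iff hbdd]
      intro m
      refine le_max_of_le_left ?_
      rw [le_div_iff₀ (hw m)]
      exact (h m).2
    · intro h m
      have hm : r.1 ≤ max (z m / (w : E) m) 0 := h.trans (ciInf_le hbdd m)
      have hm' : r.1 ≤ z m / (w : E) m := by
        rcases le_max_iff.1 hm with h' | h'
        · exact h'
        · linarith
      have : (r.1 • (w : E)) m = r.1 * (w : E) m := rfl
      rw [this]
      exact ⟨le_of_lt (mul_pos hr0 (hw m)), (le_div_iff₀ (hw m)).1 hm'⟩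
  rw [hset, volumeIoiPow_Iic hM hR, hvScalarization, ← hRdef, div_eq_mul_inv]

lemma polar (hM : 1 ≤ M) (z : E) (hz : ∀ m, 0 ≤ z m) :
    (volume : Measure E) {x : E | ∀ m, x m ∈ Icc 0 (z m)}
      = ∫⁻ w in Wpos M, ENNReal.ofReal (hvScalarization (w : E) z * (M:ℝ)⁻¹) ∂(sphereMeasure M) := by
  set B : Set E := {x : E | ∀ m, x m ∈ Icc 0 (z m)} with hB
  have hBmeas : MeasurableSet B := measurableSet_box z
  set S : Set (sphere (0:E) 1 × Ioi (0:ℝ)) := {p | (p.2.1 • (p.1 : E)) ∈ B} with hS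
  have hcont : Continuous (fun p : sphere (0:E) 1 × Ioi (0:ℝ) => (p.2.1 • (p.1 : E))) := by
    fun_prop
  have hSmeas : MeasurableSet S := hBmeas.preimage hcont.measurable
  have hpre : (homeomorphUnitSphereProd E) ⁻¹' S = Subtype.val ⁻¹' B := by
    ext x
    simp only [mem_preimage, hS, mem_setOf_eq]
    have : ((homeomorphUnitSphereProd E x).2.1 • ((homeomorphUnitSphereProd E x).1 : E)) = x := by
      simp only [homeomorphUnitSphereProd_apply_snd_coe, homeomorphUnitSphereProd_apply_fst_coe]
      exact smul_inv_smul₀ (norm_ne_zero_iff.2 x.2) x.1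
    rw [this]
  have hdim : Module.finrank ℝ E = M := finrank_euclideanSpace_fin
  have key := (Measure.measurePreserving_homeomorphUnitSphereProd
      (volume : Measure E)).measure_preimage hSmeas.nullMeasurableSet
  rw [hpre] at key
  have hcomap : (Measure.comap Subtype.val (volume : Measure E))
      ((Subtype.val ⁻¹' B : Set ({(0:E)}ᶜ : Set E))) = volume B := by
    rw [comap_subtype_coe_apply (measurableSet_singleton (0:E)).compl,
      Subtype.image_preimage_coe, Set.inter_comm, ← Set.diff_eq]
    refine measure_diff_null (measure_mono_null ?_ (null_coord (M := M) ⟨0, hM⟩))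
    intro x hx
    rw [mem_singleton_iff] at hx
    subst hx
    simp
  rw [hcomap, hdim] at key
  rw [key, Measure.prod_apply hSmeas]
  -- now sections
  have hF : ∀ w : sphere (0:E) 1,
      Measure.volumeIoiPow (M - 1) (Prod.mk w ⁻¹' S)
        = Measure.volumeIoiPow (M - 1) {r : Ioi (0:ℝ) | (r.1 • (w : E)) ∈ B} := by
    intro w; rfl
  calc ∫⁻ w, Measure.volumeIoiPow (M-1) (Prod.mk w ⁻¹' S) ∂(volume : Measure E).toSphere
      = ∫⁻ w in Wpos M, Measure.volumeIoiPow (M-1) (Prod.mk w ⁻¹' S) ∂(sphereMeasure M)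
        + ∫⁻ w in (Wpos M)ᶜ, Measure.volumeIoiPow (M-1) (Prod.mk w ⁻¹' S) ∂(sphereMeasure M) := by
        rw [sphereMeasure, lintegral_add_compl _ measurableSet_Wpos]
    _ = ∫⁻ w in Wpos M, ENNReal.ofReal (hvScalarization (w : E) z * (M:ℝ)⁻¹) ∂(sphereMeasure M) := by
        have hzero : ∫⁻ w in (Wpos M)ᶜ, Measure.volumeIoiPow (M-1) (Prod.mk w ⁻¹' S)
            ∂(sphereMeasure M) = 0 := by
          have h0 : ∀ᵐ w ∂(sphereMeasure M).restrict (Wpos M)ᶜ,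
              (Measure.volumeIoiPow (M-1)) (Prod.mk w ⁻¹' S) = 0 := by
            rw [ae_restrict_iff' measurableSet_Wpos.compl, ae_iff]
            refine measure_mono_null ?_ (sphereMeasure_null_N (M := M))
            intro w hw
            simp only [mem_setOf_eq, not_forall] at hw
            push_neg at hw
            obtain ⟨hwc, hF0⟩ := hw
            obtain ⟨m, hm⟩ := not_forall.1 hwc
            have hm' : (w : E) m ≤ 0 := not_lt.1 hm
            rcases lt_or_eq_of_le hm' with hneg | heq
            · exfalso
              apply hF0
              have : Prod.mk w ⁻¹' S = (∅ : Set (Ioi (0:ℝ))) := by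
                ext r
                simp only [mem_preimage, hS, mem_setOf_eq, mem_empty_iff_false, iff_false]
                intro hr
                have h1 := (hr m).1
                have h2 : (r.1 • (w : E)) m = r.1 * (w : E) m := rfl
                rw [h2] at h1
                nlinarith [r.2.out]
              rw [this, measure_empty]
            · exact ⟨m, heq⟩
          rw [lintegral_congr_ae h0, lintegral_zero]
        rw [hzero, add_zero]
        apply setLIntegral_congr_fun measurableSet_Wpos
        intro w hw
        beta_reduce
        rw [hF w]
        exact sec_wpos hM z hz hw

lemma hv_measurable (z : E) :
    Measurable (fun w : sphere (0:E) 1 => hvScalarization (w : E) z) := by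
  unfold hvScalarization
  apply Measurable.pow_const
  exact Measurable.iInf fun m =>
    ((measurable_const.div (measurable_coordSphere m)).max measurable_const)

lemma hv_nonneg (hM : 1 ≤ M) (z : E) (w : sphere (0:E) 1) :
    0 ≤ hvScalarization (w : E) z := by
  have : Nonempty (Fin M) := ⟨⟨0, hM⟩⟩
  exact pow_nonneg (le_ciInf fun m => le_max_right _ _) M

theorem prod_eq_scalarization_average {M : ℕ} (hM : 1 ≤ M)
    (z : EuclideanSpace ℝ (Fin M)) (hz : ∀ m, 0 ≤ z m) :
    ∏ m : Fin M, z m =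
      cM M * ⨍ w in Wpos M, hvScalarization (↑w) z ∂(sphereMeasure M) := by
  have hcM : 0 < cM M := by
    rw [cM]
    have := Real.Gamma_pos_of_pos (show (0:ℝ) < (M:ℝ)/2 + 1 by positivity)
    positivity
  set L : ℝ≥0∞ := ∫⁻ w in Wpos M, ENNReal.ofReal (hvScalarization (w : EuclideanSpace ℝ (Fin M)) z) ∂(sphereMeasure M)
    with hL
  have hMinv : (0:ℝ) ≤ (M:ℝ)⁻¹ := by positivity
  have hsplit : ∫⁻ w in Wpos M, ENNReal.ofReal (hvScalarization (w : EuclideanSpace ℝ (Fin M)) z * (M:ℝ)⁻¹)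
      ∂(sphereMeasure M) = L * ENNReal.ofReal ((M:ℝ)⁻¹) := by
    rw [hL, ← lintegral_mul_const' (ENNReal.ofReal ((M:ℝ)⁻¹)) _ ENNReal.ofReal_ne_top]
    congr 1
    ext w
    rw [ENNReal.ofReal_mul' hMinv]
  have hvol := polar hM z hz
  rw [hsplit] at hvol
  have hvolB : (volume : Measure (EuclideanSpace ℝ (Fin M))) {x : EuclideanSpace ℝ (Fin M) | ∀ m, x m ∈ Icc 0 (z m)}
      = ∏ m, ENNReal.ofReal (z m) := vol_box z hz
  have hfin : (volume : Measure (EuclideanSpace ℝ (Fin M))) {x : EuclideanSpace ℝ (Fin M) | ∀ m, x m ∈ Icc 0 (z m)} ≠ ⊤ := by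
    rw [hvolB]
    exact ENNReal.prod_ne_top fun m _ => ENNReal.ofReal_ne_top
  have hLfin : L ≠ ⊤ := by
    intro htop
    rw [htop, ENNReal.top_mul (by
      simp only [ne_eq, ENNReal.ofReal_eq_zero, not_le]
      positivity)] at hvol
    exact hfin hvol
  -- integral = L.toReal
  have hint : ∫ w in Wpos M, hvScalarization (w : EuclideanSpace ℝ (Fin M)) z ∂(sphereMeasure M) = L.toReal := by
    rw [integral_eq_lintegral_of_nonneg_ae
      (Filter.Eventually.of_forall fun w => hv_nonneg hM z w)
      ((hv_measurable z).aestronglyMeasurable)]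
  -- LHS
  have hLHS : ∏ m, z m = L.toReal * (M:ℝ)⁻¹ := by
    have : (∏ m, ENNReal.ofReal (z m)).toReal = ∏ m, z m := by
      rw [ENNReal.toReal_prod]
      exact Finset.prod_congr rfl fun m _ => ENNReal.toReal_ofReal (hz m)
    rw [← this, ← hvolB, hvol, ENNReal.toReal_mul, ENNReal.toReal_ofReal hMinv]
  rw [hLHS, setAverage_eq, hint, measureReal_def, sphereMeasure_Wpos hM,
    ENNReal.toReal_ofReal (by positivity)]
  rw [smul_eq_mul]
  have hM0 : (0:ℝ) < (M:ℝ) := by exact_mod_cast hM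
  field_simp
end

section
/- Let M ≥ 1, let Y ⊆ ℝ^M be finite, let y_ref ∈ ℝ^M, and let y* ∈ Y be Pareto-optimal in Y (there is no y ∈ Y with y* ≺ y) and satisfy y*^(m) > y_ref^(m) for all m. Set w = (y* − y_ref)/‖y* − y_ref‖₂; then w has all coordinates positive and unit Euclidean norm, and y* attains the maximum of the scalarized objective over Y: s_w(y − y_ref) ≤ s_w(y* − y_ref) for all y ∈ Y. -/
theorem pareto_optimal_attains_scalarized_max {M : ℕ} (hM : 1 ≤ M)
    (Y : Finset (EuclideanSpace ℝ (Fin M))) (yref ystar : EuclideanSpace ℝ (Fin M))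
    (hmem : ystar ∈ Y) (hopt : ¬ ∃ y ∈ Y, ParetoLT ystar y)
    (hpos : ∀ m, yref m < ystar m) :
    (∀ m, 0 < (‖ystar - yref‖⁻¹ • (ystar - yref)) m) ∧
    ‖(‖ystar - yref‖⁻¹ • (ystar - yref) : EuclideanSpace ℝ (Fin M))‖ = 1 ∧
    ∀ y ∈ Y, hvScalarization (‖ystar - yref‖⁻¹ • (ystar - yref)) (y - yref) ≤
      hvScalarization (‖ystar - yref‖⁻¹ • (ystar - yref)) (ystar - yref) := by
  haveI : Nonempty (Fin M) := ⟨⟨0, hM⟩⟩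
  set d : EuclideanSpace ℝ (Fin M) := ystar - yref with hd
  have hdpos : ∀ m, 0 < d m := by
    intro m
    simp only [hd, PiLp.sub_apply]
    linarith [hpos m]
  have hdne : d ≠ 0 := by
    intro h
    have := hdpos (Classical.arbitrary (Fin M))
    rw [h] at this
    simp at this
  have hnorm : 0 < ‖d‖ := norm_pos_iff.mpr hdne
  have hw : ∀ m, (‖d‖⁻¹ • d) m = ‖d‖⁻¹ * d m := by
    intro m; simp [PiLp.smul_apply, smul_eq_mul]
  have hwpos : ∀ m, 0 < (‖d‖⁻¹ • d) m := by
    intro m; rw [hw]; exact mul_pos (inv_pos.mpr hnorm) (hdpos m)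
  refine ⟨hwpos, norm_smul_inv_norm hdne, ?_⟩
  intro y hy
  -- compute scalarization at d
  have hself : (⨅ m : Fin M, max (d m / (‖d‖⁻¹ • d) m) 0) = ‖d‖ := by
    have : ∀ m : Fin M, max (d m / (‖d‖⁻¹ • d) m) 0 = ‖d‖ := by
      intro m
      rw [hw, div_mul_eq_div_div_swap, div_self (ne_of_gt (hdpos m)),
        one_div, inv_inv, max_eq_left hnorm.le]
    simp only [this, ciInf_const]
  -- find a coordinate where y - yref is small
  have hkey : ∃ m : Fin M, (y - yref) m ≤ d m := by
    by_contra h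
    push_neg at h
    exact hopt ⟨y, hy, fun m => by have := h m; simp only [hd, PiLp.sub_apply] at this ⊢; linarith,
      ⟨Classical.arbitrary (Fin M), by
        have := h (Classical.arbitrary (Fin M))
        simp only [hd, PiLp.sub_apply] at this ⊢; linarith⟩⟩
  obtain ⟨m, hm⟩ := hkey
  have hinf_nonneg : (0:ℝ) ≤ ⨅ m : Fin M, max ((y - yref) m / (‖d‖⁻¹ • d) m) 0 :=
    le_ciInf fun m => le_max_right _ _
  have hle : (⨅ m : Fin M, max ((y - yref) m / (‖d‖⁻¹ • d) m) 0) ≤ ‖d‖ := by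
    refine le_trans (ciInf_le (Finite.bddBelow_range _) m) ?_
    have hdiv : (y - yref) m / (‖d‖⁻¹ • d) m ≤ ‖d‖ := by
      rw [div_le_iff₀ (hwpos m), hw]
      calc (y - yref) m ≤ d m := hm
        _ = ‖d‖ * (‖d‖⁻¹ * d m) := by field_simp
    exact max_le hdiv hnorm.le
  unfold hvScalarization
  rw [hself]
  exact pow_le_pow_left₀ hinf_nonneg hle M
end

section
/- Let M ≥ 1, let Y ⊆ ℝ^M be finite, let y_ref ∈ ℝ^M, and let w ∈ ℝ^M have all coordinates positive. Assume there exists y ∈ Y with y_ref^(m) ≤ y^(m) for all m. Then max_{y ∈ Y} min_{1≤m≤M} max((y^(m) − y_ref^(m))/w^(m), 0) = sup{ r ∈ ℝ : r ≥ 0 and there exists y ∈ Y with y_ref^(m) + r·w^(m) ≤ y^(m) for all m }. -/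
theorem max_scalarization_root_eq_sSup_ray {M : ℕ} (hM : 1 ≤ M)
    (Y : Finset (EuclideanSpace ℝ (Fin M))) (hY : Y.Nonempty)
    (yref w : EuclideanSpace ℝ (Fin M)) (hw : ∀ m, 0 < w m)
    (hdom : ∃ y ∈ Y, ∀ m, yref m ≤ y m) :
    (Y.sup' hY fun y => ⨅ m : Fin M, max ((y m - yref m) / w m) 0) =
      sSup {r : ℝ | 0 ≤ r ∧ ∃ y ∈ Y, ∀ m, yref m + r * w m ≤ y m} := by
  have hFin : Nonempty (Fin M) := ⟨⟨0, hM⟩⟩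
  set f : EuclideanSpace ℝ (Fin M) → ℝ :=
    fun y => ⨅ m : Fin M, max ((y m - yref m) / w m) 0 with hf
  have hbdd : ∀ y : EuclideanSpace ℝ (Fin M), BddBelow (Set.range fun m : Fin M => max ((y m - yref m) / w m) 0) :=
    fun y => Set.Finite.bddBelow (Set.finite_range _)
  have hle : ∀ (r : ℝ) (y : EuclideanSpace ℝ (Fin M)), r ≤ f y ↔ ∀ m, r ≤ max ((y m - yref m) / w m) 0 := by
    intro r y; exact le_ciInf_iff (hbdd y)
  set G := Y.sup' hY f with hG
  obtain ⟨y0, hy0Y, hy0⟩ := hdom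
  have h0f : (0:ℝ) ≤ f y0 := le_ciInf fun m => le_max_right _ _
  have hG0 : 0 ≤ G := h0f.trans (Finset.le_sup' f hy0Y)
  set S := {r : ℝ | 0 ≤ r ∧ ∃ y ∈ Y, ∀ m, yref m + r * w m ≤ y m} with hS
  have hub : ∀ r ∈ S, r ≤ G := by
    rintro r ⟨hr0, y, hyY, hy⟩
    refine le_trans ?_ (Finset.le_sup' f hyY)
    rw [hle]
    intro m
    refine le_max_of_le_left ?_
    rw [le_div_iff₀ (hw m)]
    linarith [hy m]
  have hGS : G ∈ S := by
    obtain ⟨y1, hy1Y, hy1⟩ := Finset.exists_mem_eq_sup' hY f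
    rcases le_or_gt G 0 with h | h
    · have hGz : G = 0 := le_antisymm h hG0
      refine ⟨hG0, y0, hy0Y, fun m => ?_⟩
      rw [hGz]; simpa using hy0 m
    · refine ⟨hG0, y1, hy1Y, fun m => ?_⟩
      have hGf : G ≤ f y1 := hy1.le
      have hm := (hle G y1).mp hGf m
      have h2 : G ≤ (y1 m - yref m) / w m := by
        rcases max_cases ((y1 m - yref m) / w m) 0 with ⟨heq, _⟩ | ⟨heq, _⟩
        · rwa [heq] at hm
        · rw [heq] at hm; linarith
      rw [le_div_iff₀ (hw m)] at h2
      linarith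
  exact le_antisymm (le_csSup ⟨G, hub⟩ hGS) (csSup_le ⟨G, hGS⟩ hub)
end
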